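/- If X is a contraction (operator norm at most 1) in M_n, then its elliptical width satisfies δ₂(X) ≤ 1. -/

import Mathlib

open scoped Matrix ComplexOrder

noncomputable section

/-- The numerical range of a matrix. -/
def numRange {m : Type*} [Fintype m] (X : Matrix m m ℂ) : Set ℂ :=
  {z | ∃ v : m → ℂ, star v ⬝ᵥ v = 1 ∧ z = star v ⬝ᵥ X.mulVec v}

/-- The inradius of a subset of the plane: the radius of the largest disc it contains. -/
def inRad (S : Set ℂ) : ℝ := sSup {r : ℝ | ∃ c : ℂ, Metric.closedBall c r ⊆ S}

/-- The indiameter: the diameter of the largest disc contained in the set. -/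
def inDiam (S : Set ℂ) : ℝ := 2 * inRad S

/-- The numerical range of the compression of `X` to the subspace `S`. -/
def nrOn {m : Type*} [Fintype m] (X : Matrix m m ℂ) (S : Submodule ℂ (m → ℂ)) : Set ℂ :=
  {z | ∃ v ∈ S, star v ⬝ᵥ v = 1 ∧ z = star v ⬝ᵥ X.mulVec v}

/-- The elliptical width `δ₂(X)`: the supremum of the indiameters of the numerical
ranges of compressions of `X` to two-dimensional subspaces. -/
def ellWidth {m : Type*} [Fintype m] (X : Matrix m m ℂ) : ℝ :=
  sSup {d | ∃ S : Submodule ℂ (m → ℂ), Module.finrank ℂ S = 2 ∧ d = inDiam (nrOn X S)}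

/-- The operator (spectral) norm of a matrix. -/
def opNorm {m : Type*} [Fintype m] [DecidableEq m] (M : Matrix m m ℂ) : ℝ :=
  ‖Matrix.toEuclideanCLM (𝕜 := ℂ) M‖

/-- The Frobenius (Hilbert–Schmidt) norm of a matrix. -/
def frobNorm {m : Type*} [Fintype m] (M : Matrix m m ℂ) : ℝ :=
  Real.sqrt ((Matrix.trace (Mᴴ * M)).re)

/-- Eigenvalues of a Hermitian matrix in decreasing order (junk value `0` otherwise):
`eigDesc M k` is the `(k+1)`-th largest eigenvalue of `M`. -/
def eigDesc {m : ℕ} (M : Matrix (Fin m) (Fin m) ℂ) (k : Fin m) : ℝ :=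
  if h : M.IsHermitian then (h.eigenvalues ∘ Tuple.sort h.eigenvalues) k.rev else 0

/-- The absolute value `|X| = (XᴴX)^(1/2)` of a matrix. -/
def matAbs {m : Type*} [Fintype m] [DecidableEq m] (X : Matrix m m ℂ) : Matrix m m ℂ :=
  ((Matrix.posSemidef_conjTranspose_mul_self X).1.eigenvectorUnitary : Matrix m m ℂ) *
    Matrix.diagonal ((↑) ∘ Real.sqrt ∘ (Matrix.posSemidef_conjTranspose_mul_self X).1.eigenvalues) *
    (star (Matrix.posSemidef_conjTranspose_mul_self X).1.eigenvectorUnitary : Matrix m m ℂ)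

/-- The `2n × 2n` block matrix `[[A, X],[Xᴴ, B]]`, reindexed by `Fin (n+n)`. -/
def blockR {n : ℕ} (A X B : Matrix (Fin n) (Fin n) ℂ) :
    Matrix (Fin (n + n)) (Fin (n + n)) ℂ :=
  (Matrix.fromBlocks A X Xᴴ B).submatrix finSumFinEquiv.symm finSumFinEquiv.symm

/-- The operator norm distance from `X` to the scalar matrices. -/
def distScalar {m : Type*} [Fintype m] [DecidableEq m] (X : Matrix m m ℂ) : ℝ :=
  ⨅ a : ℂ, opNorm (X - a • 1)

/-- Apply a real function to a Hermitian matrix by the functional calculus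
(junk value `0` if the matrix is not Hermitian). -/
def hermApply {m : Type*} [Fintype m] [DecidableEq m] (f : ℝ → ℝ) (M : Matrix m m ℂ) :
    Matrix m m ℂ :=
  if h : M.IsHermitian then h.cfc f else 0

end

/-! Compress `X` to a two-dimensional subspace and take an orthonormal basis `e₀, e₁` of it
in which the compression is upper triangular (an eigenvector of the compression, completed).
A unit vector `α e₀ + β e₁` then has `⟪w, X w⟫ = |α|² μ + ᾱ β τ + |β|² σ` with `|τ| ≤ ‖X‖ ≤ 1`.
Rotating by a unimodular `ω` with `ω (μ - σ)` purely imaginary, and using `|α|² + |β|² = 1`,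
`Re (ω ⟪w, X w⟫) - Re (ω σ) = Re (ω ᾱ β τ)`, of modulus at most `|α| |β| ≤ 1/2`. So the
numerical range of every two-dimensional compression lies in a strip of width `1`, and a
disc inside such a strip has diameter at most `1`. -/

open scoped InnerProductSpace ComplexConjugate
open Complex Module

lemma exists_strip_of_upperTriangular (μ τ σ : ℂ) :
    ∃ ω : ℂ, ‖ω‖ = 1 ∧ ∃ a : ℝ, ∀ α β : ℂ, ‖α‖ ^ 2 + ‖β‖ ^ 2 = 1 →
      |(ω * (conj α * α * μ + conj α * β * τ + conj β * β * σ)).re - a| ≤ ‖τ‖ / 2 := by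
  obtain ⟨ω, hω, hrot⟩ : ∃ ω : ℂ, ‖ω‖ = 1 ∧ (ω * (μ - σ)).re = 0 := by
    set θ := arg (μ - σ)
    refine ⟨I * exp (↑(-θ) * I), by rw [norm_mul, norm_I, norm_exp_ofReal_mul_I, one_mul], ?_⟩
    have : I * exp (↑(-θ) * I) * (μ - σ) = ‖μ - σ‖ * I := by
      conv_lhs => rw [← norm_mul_exp_arg_mul_I (μ - σ)]
      calc _ = ‖μ - σ‖ * I * exp (↑(-θ) * I + θ * I) := by rw [exp_add]; ring
        _ = _ := by push_cast; simp
    rw [this]; simp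
  refine ⟨ω, hω, (ω * σ).re, fun α β hαβ => ?_⟩
  have hαβ' : ((‖α‖ ^ 2 + ‖β‖ ^ 2 : ℝ) : ℂ) = 1 := by exact_mod_cast hαβ
  push_cast at hαβ'
  have hz : ω * (conj α * α * μ + conj α * β * τ + conj β * β * σ)
      = ((‖α‖ ^ 2 : ℝ) : ℂ) * (ω * (μ - σ)) + ω * (conj α * β * τ) + ω * σ := by
    rw [conj_mul', conj_mul']
    push_cast
    linear_combination (ω * σ) * hαβ'
  rw [hz, add_re, add_re, re_ofReal_mul, hrot, mul_zero, zero_add, add_sub_cancel_right]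
  have hamgm : ‖α‖ * ‖β‖ ≤ 1 / 2 := by nlinarith [sq_nonneg (‖α‖ - ‖β‖)]
  calc |(ω * (conj α * β * τ)).re| ≤ ‖ω * (conj α * β * τ)‖ := abs_re_le_norm _
    _ = ‖α‖ * ‖β‖ * ‖τ‖ := by simp [hω]
    _ ≤ 1 / 2 * ‖τ‖ := by gcongr
    _ = ‖τ‖ / 2 := by ring

lemma exists_orthonormalBasis_inner_one_apply_zero_eq_zero {F : Type*} [NormedAddCommGroup F]
    [InnerProductSpace ℂ F] (hF : finrank ℂ F = 2) (C : F →ₗ[ℂ] F) :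
    ∃ b : OrthonormalBasis (Fin 2) ℂ F, ⟪b 1, C (b 0)⟫_ℂ = 0 := by
  have : FiniteDimensional ℂ F := Module.finite_of_finrank_eq_succ hF
  have : Nontrivial F := Module.nontrivial_of_finrank_eq_succ hF
  obtain ⟨μ, hμ⟩ := Module.End.exists_eigenvalue C
  obtain ⟨g, hg⟩ := hμ.exists_hasEigenvector
  set u : F := (‖g‖⁻¹ : ℂ) • g
  have hCu : C u = μ • u := by rw [map_smul, hg.apply_eq_smul, smul_comm]
  have hu : Orthonormal ℂ (({0} : Set (Fin 2)).domRestrict fun _ => u) :=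
    ⟨fun _ => norm_smul_inv_norm hg.2, fun i j hij => (hij (Subsingleton.elim i j)).elim⟩
  obtain ⟨b, hb⟩ := hu.exists_orthonormalBasis_extension_of_card_eq (by simpa using hF)
  have hb0 : b 0 = u := hb 0 rfl
  refine ⟨b, ?_⟩
  rw [hb0, hCu, inner_smul_right, ← hb0, b.orthonormal.inner_eq_zero (by decide), mul_zero]

theorem exists_strip_of_finrank_eq_two {E : Type*} [NormedAddCommGroup E] [InnerProductSpace ℂ E]
    (T : E →L[ℂ] E) (K : Submodule ℂ E) (hK : finrank ℂ K = 2) :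
    ∃ ω : ℂ, ‖ω‖ = 1 ∧ ∃ a : ℝ, ∀ w ∈ K, ‖w‖ = 1 → |(ω * ⟪w, T w⟫_ℂ).re - a| ≤ ‖T‖ / 2 := by
  have : FiniteDimensional ℂ K := Module.finite_of_finrank_eq_succ hK
  obtain ⟨b, hb⟩ := exists_orthonormalBasis_inner_one_apply_zero_eq_zero hK
    (K.orthogonalProjectionOnto ∘L T ∘L K.subtypeL).toLinearMap
  set e : Fin 2 → E := fun i => (b i : E)
  have he : ∀ i, ‖e i‖ = 1 := b.orthonormal.1
  have hlower : ⟪e 1, T (e 0)⟫_ℂ = 0 := by simpa using hb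
  have hτ : ‖⟪e 0, T (e 1)⟫_ℂ‖ ≤ ‖T‖ :=
    calc ‖⟪e 0, T (e 1)⟫_ℂ‖ ≤ ‖e 0‖ * (‖T‖ * ‖e 1‖) :=
          (norm_inner_le_norm _ _).trans (by gcongr; exact T.le_opNorm _)
      _ = ‖T‖ := by rw [he, he, one_mul, mul_one]
  obtain ⟨ω, hω, a, hstrip⟩ := exists_strip_of_upperTriangular
    ⟪e 0, T (e 0)⟫_ℂ ⟪e 0, T (e 1)⟫_ℂ ⟪e 1, T (e 1)⟫_ℂ
  refine ⟨ω, hω, a, fun w hw hw1 => ?_⟩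
  have hrepr : ⟪e 0, w⟫_ℂ • e 0 + ⟪e 1, w⟫_ℂ • e 1 = w := by
    simpa [Fin.sum_univ_two] using congrArg Subtype.val (b.sum_repr' ⟨w, hw⟩)
  have hparseval : ‖⟪e 0, w⟫_ℂ‖ ^ 2 + ‖⟪e 1, w⟫_ℂ‖ ^ 2 = 1 := by
    simpa [Fin.sum_univ_two, hw1] using b.sum_sq_norm_inner_right ⟨w, hw⟩
  set α := ⟪e 0, w⟫_ℂ
  set β := ⟪e 1, w⟫_ℂ
  have hexpand : ⟪w, T w⟫_ℂ = conj α * α * ⟪e 0, T (e 0)⟫_ℂ + conj α * β * ⟪e 0, T (e 1)⟫_ℂ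
      + conj β * β * ⟪e 1, T (e 1)⟫_ℂ := by
    rw [← hrepr]
    simp only [map_add, map_smul, inner_add_left, inner_add_right, inner_smul_left,
      inner_smul_right, hlower]
    ring
  rw [hexpand]
  exact (hstrip α β hparseval).trans (by gcongr)

lemma inRad_le_of_subset_strip {S : Set ℂ} {ω : ℂ} (hω : ‖ω‖ = 1) {a h : ℝ} (hh : 0 ≤ h)
    (hS : ∀ z ∈ S, |(ω * z).re - a| ≤ h) : inRad S ≤ h := by
  refine Real.sSup_le (fun r ⟨c, hc⟩ => ?_) hh
  rcases lt_or_ge r 0 with hr | hr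
  · linarith
  -- the ends of the diameter of the disc perpendicular to the strip lie in the strip
  have hend : ∀ s : ℝ, |s| = r → |(ω * c).re + s - a| ≤ h := by
    intro s hs
    have hmem : c + s * conj ω ∈ S := hc (by simp [hω, hs])
    have hre : (ω * (c + s * conj ω)).re = (ω * c).re + s := by
      rw [mul_add, mul_left_comm, mul_conj, normSq_eq_norm_sq, hω]; simp
    rw [← hre]
    exact hS _ hmem
  have h₁ := abs_le.mp (hend r (abs_of_nonneg hr))
  have h₂ := abs_le.mp (hend (-r) (by rw [abs_neg, abs_of_nonneg hr]))
  linarith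

lemma exists_eq_inner_of_mem_nrOn {m : Type*} [Fintype m] [DecidableEq m] (X : Matrix m m ℂ)
    (S : Submodule ℂ (m → ℂ)) {z : ℂ} (hz : z ∈ nrOn X S) :
    ∃ w ∈ S.map (WithLp.linearEquiv 2 ℂ (m → ℂ)).symm.toLinearMap, ‖w‖ = 1 ∧
      z = ⟪w, Matrix.toEuclideanCLM (𝕜 := ℂ) X w⟫_ℂ := by
  obtain ⟨v, hv, hv1, rfl⟩ := hz
  refine ⟨WithLp.toLp 2 v, ⟨v, hv, rfl⟩, ?_, ?_⟩
  · have h : ‖WithLp.toLp 2 v‖ ^ 2 = 1 := by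
      rw [@norm_sq_eq_re_inner ℂ, EuclideanSpace.inner_eq_star_dotProduct, dotProduct_comm]
      simp [hv1]
    exact (pow_eq_one_iff_of_nonneg (norm_nonneg _) two_ne_zero).mp h
  · rw [Matrix.toEuclideanCLM_toLp, EuclideanSpace.inner_eq_star_dotProduct, dotProduct_comm]

/-- If `X` is a contraction then its elliptical width satisfies `δ₂(X) ≤ 1`. -/
theorem stmt4 {n : ℕ} (X : Matrix (Fin n) (Fin n) ℂ) (hX : opNorm X ≤ 1) :
    ellWidth X ≤ 1 := by
  refine Real.sSup_le (fun d ⟨S, hS, hd⟩ => ?_) zero_le_one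
  obtain ⟨ω, hω, a, hstrip⟩ := exists_strip_of_finrank_eq_two
    (Matrix.toEuclideanCLM (𝕜 := ℂ) X)
    (S.map (WithLp.linearEquiv 2 ℂ (Fin n → ℂ)).symm.toLinearMap)
    (by rwa [LinearEquiv.finrank_map_eq])
  have hrad : inRad (nrOn X S) ≤ 1 / 2 := by
    refine inRad_le_of_subset_strip (a := a) hω (by norm_num) fun z hz => ?_
    obtain ⟨w, hw, hw1, rfl⟩ := exists_eq_inner_of_mem_nrOn X S hz
    exact (hstrip w hw hw1).trans (by unfold opNorm at hX; linarith)
  rw [hd, inDiam]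
  linarith
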